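/- Let H = ([n], E) with E = {e_1,…,e_m} be a 3-uniform hypergraph with m = cn hyperedges, where c ≥ 1, and suppose H is (ε, 100c)-degree bounded and (β, γ)-asymmetric with γ ≥ 200ε. Let 𝒞 = {C_1,…,C_m} be any 3XOR instance with n variables such that, for each i ∈ [m], the equation C_i uses exactly the three variables indexed by the hyperedge e_i. Set δ = min{1/200, γ/48, ε/(95c)}. If GI(G_𝒞, G_{homog(𝒞)}) ≥ 1 − δ, then val(𝒞) ≥ 0.9 − 100(ε + β). -/

import Mathlib

/-!
Let `π` be a bijection attaining `GI(G_𝒞, G_{homog 𝒞})` and give `x` the value read off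
`π(x ↦ 0)`. Variable vertices lie in no `4`-clique, so if `π` preserves every edge of the gadget
`V_{C_i}` together with the variable edges of the three variables of `C_i`, then `V_{C_i}` lands
on a whole block `V_{C_{i'}}` and the variable vertices of `C_i` land on variable pairs of
`C_{i'}` shifted by the decoded values; since `C_{i'}` is homogeneous, summing over the three
coordinates shows that the decoded assignment satisfies `C_i`. Every other equation owns a lost
edge or contains a variable whose variable edge is lost, and degree boundedness controls the
equations through the (few) such variables: at most `(11823/95) εm` equations are violated. For
`ε ≥ 1/250` the bound `val(𝒞) ≥ 1/2` suffices, and `β ≥ 0` because the identity preserves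
every hyperedge.
-/

open scoped Classical

noncomputable section

namespace Giso

/-- The finset of edges of a simple graph on a finite vertex type. -/
def edges {V : Type*} [Fintype V] (G : SimpleGraph V) : Finset (Sym2 V) :=
  Finset.univ.filter fun e => e ∈ G.edgeSet

/-- The fraction of edges of `G` carried to edges of `H` by the bijection `π`. -/
def GIval {V W : Type*} [Fintype V] [Fintype W] (G : SimpleGraph V) (H : SimpleGraph W)
    (π : V ≃ W) : ℝ :=
  (((edges G).filter fun e => Sym2.map (fun x => π x) e ∈ edges H).card : ℝ) /
    max ((edges G).card : ℝ) ((edges H).card : ℝ)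

/-- `GI(G,H)`: the best fraction of preserved edges over all vertex bijections. -/
def GI {V W : Type*} [Fintype V] [Fintype W] (G : SimpleGraph V) (H : SimpleGraph W) : ℝ :=
  ⨆ π : V ≃ W, GIval G H π

/-- A 3XOR equation on `n` variables: three distinct variable indices and a
right-hand side in `Z₂`. -/
structure XorEq (n : ℕ) where
  idx : Fin 3 → Fin n
  rhs : ZMod 2
  inj : Function.Injective idx

/-- A 3XOR instance: a list of `m` equations. -/
abbrev XorInstance (n m : ℕ) := Fin m → XorEq n

/-- The homogeneous version of an equation: the right-hand side is replaced by `0`. -/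
def XorEq.homog {n : ℕ} (C : XorEq n) : XorEq n := ⟨C.idx, 0, C.inj⟩

/-- The homogeneous version of an instance. -/
def homogInst {n m : ℕ} (𝒞 : XorInstance n m) : XorInstance n m := fun i => (𝒞 i).homog

/-- The assignment `τ` satisfies the equation `C`. -/
def satisfies {n : ℕ} (τ : Fin n → ZMod 2) (C : XorEq n) : Prop :=
  τ (C.idx 0) + τ (C.idx 1) + τ (C.idx 2) = C.rhs

/-- `val(𝒞;τ)`: the fraction of equations satisfied by `τ`. -/
def xorValAt {n m : ℕ} (𝒞 : XorInstance n m) (τ : Fin n → ZMod 2) : ℝ :=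
  ((Finset.univ.filter fun i : Fin m => satisfies τ (𝒞 i)).card : ℝ) / m

/-- `val(𝒞)`: the maximum over assignments of the fraction of satisfied equations. -/
def xorVal {n m : ℕ} (𝒞 : XorInstance n m) : ℝ :=
  ⨆ τ : Fin n → ZMod 2, xorValAt 𝒞 τ

/-- The satisfying assignments of an equation (there are four of them). -/
abbrev SatAssign {n : ℕ} (C : XorEq n) : Type :=
  {α : Fin 3 → ZMod 2 // α 0 + α 1 + α 2 = C.rhs}

/-- Vertices of the gadget graph `G_𝒞`. -/
abbrev GVert {n m : ℕ} (𝒞 : XorInstance n m) : Type :=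
  (Fin n × ZMod 2) ⊕ (Σ i : Fin m, SatAssign (𝒞 i))

/-- The gadget graph `G_𝒞` associated to a 3XOR instance `𝒞`. -/
def gadgetGraph {n m : ℕ} (𝒞 : XorInstance n m) : SimpleGraph (GVert 𝒞) :=
  SimpleGraph.fromRel fun u v =>
    (∃ (j : Fin n) (a a' : ZMod 2), u = Sum.inl (j, a) ∧ v = Sum.inl (j, a')) ∨
    (∃ (i : Fin m) (α α' : SatAssign (𝒞 i)), u = Sum.inr ⟨i, α⟩ ∧ v = Sum.inr ⟨i, α'⟩) ∨
    (∃ (i : Fin m) (α : SatAssign (𝒞 i)) (t : Fin 3),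
      u = Sum.inl ((𝒞 i).idx t, α.1 t) ∧ v = Sum.inr ⟨i, α⟩)

/-- The hyperedge of variables used by an equation. -/
def tripleOf {n : ℕ} (C : XorEq n) : Finset (Fin n) := {C.idx 0, C.idx 1, C.idx 2}

/-- Number of fixed points of a permutation of `[n]`. -/
def fixedCount {n : ℕ} (π : Equiv.Perm (Fin n)) : ℕ :=
  (Finset.univ.filter fun v => π v = v).card

/-- `AUT(H;π)`: the fraction of hyperedges `e` with `π(e)` again a hyperedge. -/
def hAut {n : ℕ} (E : Finset (Finset (Fin n))) (π : Equiv.Perm (Fin n)) : ℝ :=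
  ((E.filter fun e => e.image (fun x => π x) ∈ E).card : ℝ) / (E.card : ℝ)

/-- `(β,γ)`-asymmetry for a hypergraph given by its edge set. -/
def hAsymmetric {n : ℕ} (E : Finset (Finset (Fin n))) (β γ : ℝ) : Prop :=
  ∀ π : Equiv.Perm (Fin n), (fixedCount π : ℝ) ≤ (1 - β) * n → hAut E π < 1 - γ

/-- Degree of a vertex in a hypergraph. -/
def hdeg {n : ℕ} (E : Finset (Finset (Fin n))) (v : Fin n) : ℕ :=
  (E.filter fun e => v ∈ e).card

/-- `(ε,D)`-degree boundedness: every set of `⌈εn⌉` vertices has average degree at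
most `D`. -/
def DegBounded {n : ℕ} (E : Finset (Finset (Fin n))) (ε D : ℝ) : Prop :=
  ∀ S : Finset (Fin n), S.card = ⌈ε * n⌉₊ → ((∑ v ∈ S, hdeg E v : ℕ) : ℝ) ≤ D * S.card

section SatAssign

variable {n : ℕ} (C : XorEq n)

lemma card_satAssign : Fintype.card (SatAssign C) = 4 := by
  let e : SatAssign C ≃ ZMod 2 × ZMod 2 :=
    { toFun := fun α => (α.1 0, α.1 1)
      invFun := fun p => ⟨![p.1, p.2, C.rhs - p.1 - p.2], by simp⟩
      left_inv := fun α => by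
        obtain ⟨α, hα⟩ := α
        ext s
        fin_cases s <;> simp [← hα]
        ring
      right_inv := fun p => rfl }
  simp [Fintype.card_congr e]

lemma exists_satAssign_apply_eq (t : Fin 3) (a : ZMod 2) : ∃ α : SatAssign C, α.1 t = a := by
  fin_cases t
  exacts [⟨⟨![a, C.rhs - a, 0], by simp⟩, rfl⟩, ⟨⟨![C.rhs - a, a, 0], by simp⟩, rfl⟩,
    ⟨⟨![C.rhs - a, 0, a], by simp⟩, rfl⟩]

variable {C}

lemma satAssign_eq_of_apply_eq {t : Fin 3} {α β : SatAssign C}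
    (h₀ : α.1 t = β.1 t) (h₁ : α.1 (t + 1) = β.1 (t + 1)) : α = β := by
  obtain ⟨α, hα⟩ := α
  obtain ⟨β, hβ⟩ := β
  ext s
  fin_cases t <;> fin_cases s <;> simp_all <;> grind

lemma satAssign_pigeonhole {t : Fin 3} {b : ZMod 2} {α β γ : SatAssign C}
    (hα : α.1 t = b) (hβ : β.1 t = b) (hγ : γ.1 t = b) : α = β ∨ α = γ ∨ β = γ := by
  have key : ∀ u v w : ZMod 2, u = v ∨ u = w ∨ v = w := by decide
  rcases key (α.1 (t + 1)) (β.1 (t + 1)) (γ.1 (t + 1)) with h | h | h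
  · exact .inl (satAssign_eq_of_apply_eq (hα.trans hβ.symm) h)
  · exact .inr (.inl (satAssign_eq_of_apply_eq (hα.trans hγ.symm) h))
  · exact .inr (.inr (satAssign_eq_of_apply_eq (hβ.trans hγ.symm) h))

end SatAssign

section GadgetGraph

open Sum

variable {n m : ℕ} (𝒟 : XorInstance n m)

lemma card_gVert : Fintype.card (GVert 𝒟) = 2 * n + 4 * m := by
  simp [Fintype.card_sigma, card_satAssign, mul_comm]

lemma gadgetGraph_adj_inl_inl (x y : Fin n) (a b : ZMod 2) :
    (gadgetGraph 𝒟).Adj (inl (x, a)) (inl (y, b)) ↔ x = y ∧ a ≠ b := by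
  simp only [gadgetGraph, SimpleGraph.fromRel_adj]
  aesop

lemma gadgetGraph_adj_inl_inr (x : Fin n) (a : ZMod 2) (j : Fin m) (β : SatAssign (𝒟 j)) :
    (gadgetGraph 𝒟).Adj (inl (x, a)) (inr ⟨j, β⟩) ↔ ∃ t, (𝒟 j).idx t = x ∧ β.1 t = a := by
  simp only [gadgetGraph, SimpleGraph.fromRel_adj]
  aesop

lemma gadgetGraph_adj_inr_inr (i : Fin m) (α β : SatAssign (𝒟 i)) :
    (gadgetGraph 𝒟).Adj (inr ⟨i, α⟩) (inr ⟨i, β⟩) ↔ α ≠ β := by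
  simp only [gadgetGraph, SimpleGraph.fromRel_adj]
  aesop

variable {𝒟}

lemma eq_of_gadgetGraph_adj_inr_inr {i j : Fin m} {α : SatAssign (𝒟 i)} {β : SatAssign (𝒟 j)}
    (h : (gadgetGraph 𝒟).Adj (inr ⟨i, α⟩) (inr ⟨j, β⟩)) : i = j := by
  simp only [gadgetGraph, SimpleGraph.fromRel_adj] at h
  aesop

lemma gadgetGraph_not_adj_of_adj_inl_inl {p q : Fin n × ZMod 2} {w : GVert 𝒟}
    (hpq : (gadgetGraph 𝒟).Adj (inl p) (inl q)) (hp : (gadgetGraph 𝒟).Adj (inl p) w) :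
    ¬ (gadgetGraph 𝒟).Adj (inl q) w := by
  intro hq
  obtain ⟨hpq₁, hpq₂⟩ := (gadgetGraph_adj_inl_inl 𝒟 ..).mp hpq
  rcases w with r | ⟨j, δ⟩
  · obtain ⟨-, hpr⟩ := (gadgetGraph_adj_inl_inl 𝒟 ..).mp hp
    obtain ⟨-, hqr⟩ := (gadgetGraph_adj_inl_inl 𝒟 ..).mp hq
    have key : ∀ u v w : ZMod 2, u ≠ v → u ≠ w → v ≠ w → False := by decide
    exact key _ _ _ hpq₂ hpr hqr
  · obtain ⟨t, hpt, hδp⟩ := (gadgetGraph_adj_inl_inr 𝒟 ..).mp hp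
    obtain ⟨s, hqs, hδq⟩ := (gadgetGraph_adj_inl_inr 𝒟 ..).mp hq
    obtain rfl : t = s := (𝒟 j).inj (by rw [hpt, hqs, hpq₁])
    exact hpq₂ (hδp.symm.trans hδq)

/-- Equivalently, variable vertices lie in no `4`-clique of the gadget graph. -/
lemma gadgetGraph_not_triangle_of_adj_inl {p : Fin n × ZMod 2} {u v w : GVert 𝒟}
    (hu : (gadgetGraph 𝒟).Adj (inl p) u) (hv : (gadgetGraph 𝒟).Adj (inl p) v)
    (hw : (gadgetGraph 𝒟).Adj (inl p) w) (huv : (gadgetGraph 𝒟).Adj u v)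
    (huw : (gadgetGraph 𝒟).Adj u w) (hvw : (gadgetGraph 𝒟).Adj v w) : False := by
  rcases u with q | ⟨i, α⟩
  · exact gadgetGraph_not_adj_of_adj_inl_inl hu hv huv
  rcases v with q | ⟨j, β⟩
  · exact gadgetGraph_not_adj_of_adj_inl_inl hv hu huv.symm
  rcases w with q | ⟨k, γ⟩
  · exact gadgetGraph_not_adj_of_adj_inl_inl hw hu huw.symm
  obtain rfl := eq_of_gadgetGraph_adj_inr_inr huv
  obtain rfl := eq_of_gadgetGraph_adj_inr_inr huw
  rw [gadgetGraph_adj_inr_inr] at huv huw hvw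
  obtain ⟨t, ht, hα⟩ := (gadgetGraph_adj_inl_inr 𝒟 ..).mp hu
  obtain ⟨s, hs, hβ⟩ := (gadgetGraph_adj_inl_inr 𝒟 ..).mp hv
  obtain ⟨r, hr, hγ⟩ := (gadgetGraph_adj_inl_inr 𝒟 ..).mp hw
  obtain rfl : s = t := (𝒟 i).inj (hs.trans ht.symm)
  obtain rfl : r = s := (𝒟 i).inj (hr.trans hs.symm)
  rcases satAssign_pigeonhole hα hβ hγ with h | h | h <;> contradiction

variable (𝒟)

lemma card_edges_gadgetGraph_le : (edges (gadgetGraph 𝒟)).card ≤ n + 22 * m := by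
  let f : Fin n ⊕ (Σ i, Sym2 (SatAssign (𝒟 i))) ⊕ ((Σ i, SatAssign (𝒟 i)) × Fin 3) →
      Sym2 (GVert 𝒟) :=
    Sum.elim (fun x => s(inl (x, 0), inl (x, 1))) <| Sum.elim
      (fun w => w.2.map fun α => inr ⟨w.1, α⟩)
      (fun z => s(inl ((𝒟 z.1.1).idx z.2, z.1.2.1 z.2), inr z.1))
  have hcover : edges (gadgetGraph 𝒟) ⊆ Finset.univ.image f := by
    intro e he
    induction e using Sym2.ind with
    | _ u v =>
      have hadj : (gadgetGraph 𝒟).Adj u v := by simpa [edges] using he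
      rw [Finset.mem_image]
      rcases u with ⟨x, a⟩ | ⟨i, α⟩ <;> rcases v with ⟨y, b⟩ | ⟨j, β⟩
      · obtain ⟨rfl, hab⟩ := (gadgetGraph_adj_inl_inl 𝒟 ..).mp hadj
        have key : ∀ a b : ZMod 2, a ≠ b → a = 0 ∧ b = 1 ∨ a = 1 ∧ b = 0 := by decide
        rcases key a b hab with ⟨rfl, rfl⟩ | ⟨rfl, rfl⟩
        exacts [⟨inl x, Finset.mem_univ _, rfl⟩, ⟨inl x, Finset.mem_univ _, Sym2.eq_swap⟩]
      · obtain ⟨t, rfl, rfl⟩ := (gadgetGraph_adj_inl_inr 𝒟 ..).mp hadj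
        exact ⟨inr (inr (⟨j, β⟩, t)), Finset.mem_univ _, rfl⟩
      · obtain ⟨t, rfl, rfl⟩ := (gadgetGraph_adj_inl_inr 𝒟 ..).mp hadj.symm
        exact ⟨inr (inr (⟨i, α⟩, t)), Finset.mem_univ _, Sym2.eq_swap⟩
      · obtain rfl := eq_of_gadgetGraph_adj_inr_inr hadj
        exact ⟨inr (inl ⟨i, s(α, β)⟩), Finset.mem_univ _, rfl⟩
  calc (edges (gadgetGraph 𝒟)).card ≤ (Finset.univ.image f).card := Finset.card_le_card hcover
    _ ≤ Fintype.card (Fin n ⊕ (Σ i, Sym2 (SatAssign (𝒟 i))) ⊕ ((Σ i, SatAssign (𝒟 i)) × Fin 3)) :=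
      Finset.card_image_le
    _ = n + 22 * m := by
      simp only [Fintype.card_sum, Fintype.card_sigma, Fintype.card_prod, Sym2.card,
        card_satAssign, Fintype.card_fin, Finset.sum_const, Finset.card_univ, smul_eq_mul]
      norm_num [Nat.choose_two_right]
      ring

end GadgetGraph

section GraphIsomorphism

variable {V W : Type*} [Fintype V] [Fintype W] (G : SimpleGraph V) (H : SimpleGraph W)

def lostEdges (π : V ≃ W) : Finset (Sym2 V) :=
  (edges G).filter fun e => Sym2.map (fun x => π x) e ∉ edges H

variable {G H}

lemma lostEdges_subset {π : V ≃ W} : lostEdges G H π ⊆ edges G :=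
  Finset.filter_subset _ _

lemma mk_mem_lostEdges {π : V ≃ W} {u v : V} :
    s(u, v) ∈ lostEdges G H π ↔ G.Adj u v ∧ ¬ H.Adj (π u) (π v) := by
  simp [lostEdges, edges]

lemma GIval_le_one (π : V ≃ W) : GIval G H π ≤ 1 :=
  div_le_one_of_le₀ ((Nat.cast_le.mpr (Finset.card_filter_le _ _)).trans (le_max_left _ _))
    ((Nat.cast_nonneg _).trans (le_max_left _ _))

lemma GIval_of_isEmpty [IsEmpty V] (π : V ≃ W) : GIval G H π = 0 := by
  simp [GIval, edges]

lemma exists_GI_le_GIval [Nonempty (V ≃ W)] : ∃ π : V ≃ W, GI G H ≤ GIval G H π := by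
  obtain ⟨π, hπ⟩ := Finite.exists_max (GIval G H)
  exact ⟨π, ciSup_le hπ⟩

lemma card_lostEdges_le {π : V ≃ W} {δ : ℝ} (h : 1 - δ ≤ GIval G H π) :
    ((lostEdges G H π).card : ℝ) ≤ δ * max ((edges G).card : ℝ) ((edges H).card : ℝ) := by
  set M := max ((edges G).card : ℝ) ((edges H).card : ℝ)
  set P := (edges G).filter fun e => Sym2.map (fun x => π x) e ∈ edges H
  have hsplit : (P.card : ℝ) + (lostEdges G H π).card = (edges G).card := by
    exact_mod_cast Finset.card_filter_add_card_filter_not _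
  have hGM : ((edges G).card : ℝ) ≤ M := le_max_left _ _
  rcases (Nat.cast_nonneg _ |>.trans hGM).eq_or_lt with hM | hM
  · rw [← hM, mul_zero]
    linarith [(P.card.cast_nonneg : (0 : ℝ) ≤ _)]
  · have hP : (1 - δ) * M ≤ P.card := (le_div_iff₀ hM).mp h
    linarith

end GraphIsomorphism

section Hypergraph

variable {n : ℕ} {E : Finset (Finset (Fin n))}

lemma hAsymmetric.nonneg {β γ : ℝ} (h : hAsymmetric E β γ) (hE : E.Nonempty) (hγ : 0 ≤ γ) :
    0 ≤ β := by
  by_contra! hβ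
  have hfix : fixedCount (1 : Equiv.Perm (Fin n)) = n := by simp [fixedCount]
  have hid := h 1 (by rw [hfix]; nlinarith [(n.cast_nonneg : (0 : ℝ) ≤ n)])
  have : hAut E 1 = 1 := by simp [hAut, hE.card_pos.ne']
  linarith

lemma DegBounded.sum_hdeg_le {ε D : ℝ} (h : DegBounded E ε D) (hD : 0 ≤ D) (hε : ε ≤ 1)
    {S : Finset (Fin n)} (hS : (S.card : ℝ) ≤ ε * n) :
    ((∑ v ∈ S, hdeg E v : ℕ) : ℝ) ≤ D * (ε * n + 1) := by
  have hεn : 0 ≤ ε * n := (Nat.cast_nonneg _).trans hS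
  obtain ⟨T, hST, hT⟩ := Finset.exists_superset_card_eq (s := S) (n := ⌈ε * n⌉₊)
    (Nat.cast_le.mp (hS.trans (Nat.le_ceil _)))
    (by simpa using Nat.ceil_le.mpr (by nlinarith [(n.cast_nonneg : (0 : ℝ) ≤ n)]))
  calc ((∑ v ∈ S, hdeg E v : ℕ) : ℝ) ≤ ((∑ v ∈ T, hdeg E v : ℕ) : ℝ) :=
        Nat.cast_le.mpr (Finset.sum_le_sum_of_subset hST)
    _ ≤ D * T.card := h T hT
    _ ≤ D * (ε * n + 1) := by
        rw [hT]
        exact mul_le_mul_of_nonneg_left (Nat.ceil_lt_add_one hεn).le hD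

lemma hdeg_image {m : ℕ} {f : Fin m → Finset (Fin n)} (hf : f.Injective) (x : Fin n) :
    hdeg (Finset.univ.image f) x = (Finset.univ.filter fun i => x ∈ f i).card := by
  rw [hdeg, Finset.filter_image, Finset.card_image_of_injective _ hf]

end Hypergraph

section XorValue

variable {n m : ℕ}

lemma satisfies_const_iff {C : XorEq n} (a : ZMod 2) : satisfies (fun _ => a) C ↔ a = C.rhs := by
  have h : a + a + a = a := by revert a; decide
  rw [satisfies, h]

lemma le_xorVal (𝒞 : XorInstance n m) (τ : Fin n → ZMod 2) : xorValAt 𝒞 τ ≤ xorVal 𝒞 :=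
  le_ciSup (Set.finite_range _).bddAbove τ

/-- Each equation is satisfied by exactly one of the two constant assignments. -/
lemma half_le_xorVal (𝒞 : XorInstance n m) (hm : 0 < m) : 1 / 2 ≤ xorVal 𝒞 := by
  have hsum : xorValAt 𝒞 (fun _ => 0) + xorValAt 𝒞 (fun _ => 1) = 1 := by
    have hsplit := Finset.card_filter_add_card_filter_not (s := Finset.univ)
      fun i : Fin m => (0 : ZMod 2) = (𝒞 i).rhs
    have hflip : ∀ r : ZMod 2, ¬ (0 = r) ↔ 1 = r := by decide
    simp only [hflip, Finset.card_univ, Fintype.card_fin] at hsplit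
    simp only [xorValAt, satisfies_const_iff, ← add_div]
    rw [div_eq_one_iff_eq (by positivity)]
    exact_mod_cast hsplit
  linarith [le_xorVal 𝒞 fun _ => 0, le_xorVal 𝒞 fun _ => 1]

end XorValue

section Decoding

open Sum

variable {n m : ℕ} {𝒞 : XorInstance n m} (π : GVert 𝒞 ≃ GVert (homogInst 𝒞))

/-- Junk value `0` when `π (x ↦ 0)` is a constraint vertex. -/
def decode (x : Fin n) : ZMod 2 :=
  Sum.elim Prod.snd (fun _ => 0) (π (inl (x, 0)))

structure BlockPreserved (i : Fin m) : Prop where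
  clique : ∀ α β : SatAssign (𝒞 i), α ≠ β →
    (gadgetGraph (homogInst 𝒞)).Adj (π (inr ⟨i, α⟩)) (π (inr ⟨i, β⟩))
  incidence : ∀ (α : SatAssign (𝒞 i)) (t : Fin 3),
    (gadgetGraph (homogInst 𝒞)).Adj (π (inl ((𝒞 i).idx t, α.1 t))) (π (inr ⟨i, α⟩))
  varEdge : ∀ t : Fin 3,
    (gadgetGraph (homogInst 𝒞)).Adj (π (inl ((𝒞 i).idx t, 0))) (π (inl ((𝒞 i).idx t, 1)))

variable {π} {i : Fin m}

lemma BlockPreserved.exists_map_inr (hg : BlockPreserved π i) (α : SatAssign (𝒞 i)) :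
    ∃ p, π (inr ⟨i, α⟩) = inr p := by
  have hcard : (Finset.univ.erase α).card = 3 := by
    rw [Finset.card_erase_of_mem (Finset.mem_univ α), Finset.card_univ, card_satAssign]
  obtain ⟨β₁, β₂, β₃, h₁₂, h₁₃, h₂₃, hβ⟩ := Finset.card_eq_three.mp hcard
  have hne : ∀ β ∈ ({β₁, β₂, β₃} : Finset _), β ≠ α := fun β h =>
    Finset.ne_of_mem_erase (hβ ▸ h)
  rcases hα : π (inr ⟨i, α⟩) with p | p
  · have hp : ∀ β ∈ ({β₁, β₂, β₃} : Finset _),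
        (gadgetGraph (homogInst 𝒞)).Adj (inl p) (π (inr ⟨i, β⟩)) := fun β h =>
      hα ▸ hg.clique α β (hne β h).symm
    exact (gadgetGraph_not_triangle_of_adj_inl (hp β₁ (by simp)) (hp β₂ (by simp))
      (hp β₃ (by simp)) (hg.clique _ _ h₁₂) (hg.clique _ _ h₁₃) (hg.clique _ _ h₂₃)).elim
  · exact ⟨p, rfl⟩

lemma BlockPreserved.exists_block (hg : BlockPreserved π i) :
    ∃ (i' : Fin m) (F : SatAssign (𝒞 i) ≃ SatAssign (homogInst 𝒞 i')),
      ∀ α, π (inr ⟨i, α⟩) = inr ⟨i', F α⟩ := by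
  obtain ⟨α₀, -⟩ := exists_satAssign_apply_eq (𝒞 i) 0 0
  obtain ⟨⟨i', α₀'⟩, h₀⟩ := hg.exists_map_inr α₀
  have hblock : ∀ α, ∃ α', π (inr ⟨i, α⟩) = inr ⟨i', α'⟩ := by
    intro α
    obtain ⟨⟨j, α'⟩, h⟩ := hg.exists_map_inr α
    by_cases hα : α = α₀
    · exact ⟨α₀', hα ▸ h₀⟩
    · have hadj := hg.clique α α₀ hα
      rw [h, h₀] at hadj
      obtain rfl := eq_of_gadgetGraph_adj_inr_inr hadj
      exact ⟨α', h⟩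
  choose F hF using hblock
  have hinj : F.Injective := fun α β h =>
    eq_of_heq (Sigma.mk.inj (inr.inj (π.injective ((hF α).trans (h ▸ hF β).symm)))).2
  refine ⟨i', Equiv.ofBijective F ?_, hF⟩
  exact (Fintype.bijective_iff_injective_and_card F).mpr ⟨hinj, by simp [card_satAssign]⟩

lemma BlockPreserved.exists_map_inl (hg : BlockPreserved π i) (t : Fin 3) :
    ∃ y, ∀ a, π (inl ((𝒞 i).idx t, a)) = inl (y, decode π ((𝒞 i).idx t) + a) := by
  obtain ⟨i', F, hF⟩ := hg.exists_block
  have hvar : ∀ a, ∃ q, π (inl ((𝒞 i).idx t, a)) = inl q := by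
    intro a
    rcases h : π (inl ((𝒞 i).idx t, a)) with q | ⟨j, δ⟩
    · exact ⟨q, rfl⟩
    obtain ⟨α, hα⟩ := exists_satAssign_apply_eq (𝒞 i) t a
    have hadj := hg.incidence α t
    rw [hα, h, hF] at hadj
    obtain rfl := eq_of_gadgetGraph_adj_inr_inr hadj
    obtain ⟨β, rfl⟩ := F.surjective δ
    simpa using π.injective (h.trans (hF β).symm)
  obtain ⟨⟨y, b⟩, h₀⟩ := hvar 0
  obtain ⟨⟨y', b'⟩, h₁⟩ := hvar 1
  have hadj := hg.varEdge t
  rw [h₀, h₁, gadgetGraph_adj_inl_inl] at hadj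
  obtain ⟨rfl, hbb'⟩ := hadj
  have hdec : decode π ((𝒞 i).idx t) = b := by simp [decode, h₀]
  have hb' : b' = b + 1 := (by decide : ∀ u v : ZMod 2, u ≠ v → v = u + 1) b b' hbb'
  refine ⟨y, fun a => ?_⟩
  rcases (by decide : ∀ a : ZMod 2, a = 0 ∨ a = 1) a with rfl | rfl
  · rw [h₀, hdec, add_zero]
  · rw [h₁, hdec, hb']

/-- A satisfying assignment `α` of `C_i` goes to one of the homogeneous `C_{i'}` whose values are
`decode π + α` up to a permutation of the coordinates; summing them gives `∑ decode π + rhs = 0`. -/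
lemma BlockPreserved.satisfies_decode (hg : BlockPreserved π i) :
    satisfies (decode π) (𝒞 i) := by
  obtain ⟨i', F, hF⟩ := hg.exists_block
  choose Y hY using hg.exists_map_inl
  obtain ⟨α, -⟩ := exists_satAssign_apply_eq (𝒞 i) 0 0
  have hT : ∀ t, ∃ s, (homogInst 𝒞 i').idx s = Y t ∧
      (F α).1 s = decode π ((𝒞 i).idx t) + α.1 t := by
    intro t
    have hadj := hg.incidence α t
    rwa [hY, hF, gadgetGraph_adj_inl_inr] at hadj
  choose T hTidx hTval using hT
  have hYinj : Function.Injective Y := by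
    intro t s hts
    have h : π (inl ((𝒞 i).idx t, decode π ((𝒞 i).idx t) + decode π ((𝒞 i).idx s))) =
        π (inl ((𝒞 i).idx s, 0)) := by
      rw [hY, hY, hts, ← add_assoc, CharTwo.add_self_eq_zero, zero_add, add_zero]
    exact (𝒞 i).inj (Prod.mk.inj (inl_injective (π.injective h))).1
  have hTbij : Function.Bijective T := Finite.injective_iff_bijective.mp fun t s h =>
    hYinj (by rw [← hTidx, ← hTidx, h])
  have hsum := hTbij.sum_comp (F α).1
  simp only [Fin.sum_univ_three, hTval] at hsum
  have hF₀ : (F α).1 0 + (F α).1 1 + (F α).1 2 = 0 := (F α).2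
  rw [satisfies]
  linear_combination hsum + hF₀ - α.2 - CharTwo.add_self_eq_zero (𝒞 i).rhs

end Decoding

section Counting

open Sum

variable {n m : ℕ} {𝒞 : XorInstance n m} (π : GVert 𝒞 ≃ GVert (homogInst 𝒞))

def lostVars : Finset (Fin n) :=
  Finset.univ.filter fun x =>
    ¬ (gadgetGraph (homogInst 𝒞)).Adj (π (inl (x, 0))) (π (inl (x, 1)))

lemma card_lostVars_le :
    (lostVars π).card ≤ (lostEdges (gadgetGraph 𝒞) (gadgetGraph (homogInst 𝒞)) π).card := by
  refine Finset.card_le_card_of_injOn (fun x => s(inl (x, 0), inl (x, 1))) (fun x hx => ?_) ?_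
  · rw [Finset.mem_coe, mk_mem_lostEdges, gadgetGraph_adj_inl_inl]
    exact ⟨⟨rfl, by decide⟩, (Finset.mem_filter.mp hx).2⟩
  · intro x _ y _ h
    rcases Sym2.eq_iff.mp h with ⟨h, -⟩ | ⟨h, -⟩ <;> exact (Prod.mk.inj (inl_injective h)).1

lemma card_filter_exists_inr_mem_le_one {e : Sym2 (GVert 𝒞)} (he : e ∈ edges (gadgetGraph 𝒞)) :
    (Finset.univ.filter fun i : Fin m => ∃ α, inr ⟨i, α⟩ ∈ e).card ≤ 1 := by
  rw [Finset.card_le_one]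
  intro i hi j hj
  obtain ⟨α, hα⟩ := (Finset.mem_filter.mp hi).2
  obtain ⟨β, hβ⟩ := (Finset.mem_filter.mp hj).2
  induction e using Sym2.ind with
  | _ u v =>
    have hadj : (gadgetGraph 𝒞).Adj u v := by simpa [edges] using he
    rw [Sym2.mem_iff] at hα hβ
    rcases hα with rfl | rfl <;> rcases hβ with h | h
    · exact (Sigma.mk.inj (inr.inj h)).1.symm
    · subst h
      exact eq_of_gadgetGraph_adj_inr_inr hadj
    · subst h
      exact eq_of_gadgetGraph_adj_inr_inr hadj.symm
    · exact (Sigma.mk.inj (inr.inj h)).1.symm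

lemma exists_lost_of_not_blockPreserved {i : Fin m} (h : ¬ BlockPreserved π i) :
    (∃ e ∈ lostEdges (gadgetGraph 𝒞) (gadgetGraph (homogInst 𝒞)) π, ∃ α, inr ⟨i, α⟩ ∈ e) ∨
      ∃ x ∈ lostVars π, x ∈ tripleOf (𝒞 i) := by
  by_contra! hlost
  refine h ⟨fun α β hαβ => ?_, fun α t => ?_, fun t => ?_⟩ <;> by_contra hadj
  · refine hlost.1 s(inr ⟨i, α⟩, inr ⟨i, β⟩) ?_ α (Sym2.mem_mk_left _ _)
    exact mk_mem_lostEdges.mpr ⟨(gadgetGraph_adj_inr_inr 𝒞 i α β).mpr hαβ, hadj⟩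
  · refine hlost.1 s(inl ((𝒞 i).idx t, α.1 t), inr ⟨i, α⟩) ?_ α (Sym2.mem_mk_right _ _)
    exact mk_mem_lostEdges.mpr ⟨(gadgetGraph_adj_inl_inr 𝒞 ..).mpr ⟨t, rfl, rfl⟩, hadj⟩
  · refine hlost.2 ((𝒞 i).idx t) (Finset.mem_filter.mpr ⟨Finset.mem_univ _, hadj⟩) ?_
    fin_cases t <;> simp [tripleOf]

lemma card_filter_not_satisfies_decode_le :
    (Finset.univ.filter fun i => ¬ satisfies (decode π) (𝒞 i)).card ≤
      (lostEdges (gadgetGraph 𝒞) (gadgetGraph (homogInst 𝒞)) π).card +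
        ∑ x ∈ lostVars π, (Finset.univ.filter fun i : Fin m => x ∈ tripleOf (𝒞 i)).card := by
  set L := lostEdges (gadgetGraph 𝒞) (gadgetGraph (homogInst 𝒞)) π
  have hcover : (Finset.univ.filter fun i => ¬ satisfies (decode π) (𝒞 i)) ⊆
      L.biUnion (fun e => Finset.univ.filter fun i : Fin m => ∃ α, inr ⟨i, α⟩ ∈ e) ∪
        (lostVars π).biUnion fun x => Finset.univ.filter fun i : Fin m => x ∈ tripleOf (𝒞 i) := by
    intro i hi
    have hg : ¬ BlockPreserved π i := fun hg =>
      (Finset.mem_filter.mp hi).2 hg.satisfies_decode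
    rcases exists_lost_of_not_blockPreserved π hg with ⟨e, he, hie⟩ | ⟨x, hx, hix⟩
    · exact Finset.mem_union_left _ (Finset.mem_biUnion.mpr ⟨e, he, by simpa using hie⟩)
    · exact Finset.mem_union_right _ (Finset.mem_biUnion.mpr ⟨x, hx, by simpa using hix⟩)
  refine (Finset.card_le_card hcover).trans <| (Finset.card_union_le _ _).trans <|
    add_le_add ?_ Finset.card_biUnion_le
  simpa using Finset.card_biUnion_le_card_mul L _ 1 fun e he =>
    card_filter_exists_inr_mem_le_one (lostEdges_subset he)

end Counting

section Bounds

variable {n m : ℕ} {c ε : ℝ} {𝒞 : XorInstance n m} {π : GVert 𝒞 ≃ GVert (homogInst 𝒞)}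

lemma card_lostEdges_gadgetGraph_le (hc : 1 ≤ c) (hm : (m : ℝ) = c * n) (hε : 0 ≤ ε)
    (hπ : 1 - ε / (95 * c) ≤ GIval (gadgetGraph 𝒞) (gadgetGraph (homogInst 𝒞)) π) :
    ((lostEdges (gadgetGraph 𝒞) (gadgetGraph (homogInst 𝒞)) π).card : ℝ) ≤
      23 / 95 * (ε * n) := by
  have hM : max ((edges (gadgetGraph 𝒞)).card : ℝ) (edges (gadgetGraph (homogInst 𝒞))).card ≤
      n + 22 * m := by
    exact_mod_cast max_le (card_edges_gadgetGraph_le _) (card_edges_gadgetGraph_le _)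
  calc _ ≤ ε / (95 * c) * (n + 22 * m) := (card_lostEdges_le hπ).trans (by gcongr)
    _ ≤ 23 / 95 * (ε * n) := by
      rw [hm, div_mul_eq_mul_div, div_le_iff₀ (by positivity)]
      nlinarith [mul_nonneg (mul_nonneg hε n.cast_nonneg) (sub_nonneg.mpr hc)]

/-- If some variable edge is lost then `1 ≤ (23/95)εn`, which absorbs the rounding in `⌈εn⌉`:
`εn + 1 ≤ (118/95)εn`. -/
lemma sum_card_lostVars_le (hc : 1 ≤ c) (hm : (m : ℝ) = c * n)
    (hedges : Function.Injective fun i : Fin m => tripleOf (𝒞 i))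
    (hdb : DegBounded (Finset.univ.image fun i : Fin m => tripleOf (𝒞 i)) ε (100 * c))
    (hε : ε < 1)
    (hL : ((lostEdges (gadgetGraph 𝒞) (gadgetGraph (homogInst 𝒞)) π).card : ℝ) ≤
      23 / 95 * (ε * n)) :
    ((∑ x ∈ lostVars π, (Finset.univ.filter fun i => x ∈ tripleOf (𝒞 i)).card : ℕ) : ℝ) ≤
      11800 / 95 * (ε * m) := by
  have hεn : 0 ≤ ε * n := by linarith [(Nat.cast_nonneg _).trans hL]
  rw [hm]
  rcases (lostVars π).eq_empty_or_nonempty with hV | hV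
  · rw [hV, Finset.sum_empty, Nat.cast_zero]
    nlinarith
  have hVL : ((lostVars π).card : ℝ) ≤ 23 / 95 * (ε * n) :=
    (Nat.cast_le.mpr (card_lostVars_le π)).trans hL
  have hV1 : (1 : ℝ) ≤ (lostVars π).card := by exact_mod_cast hV.card_pos
  have := hdb.sum_hdeg_le (by positivity) hε.le (hVL.trans (by linarith))
  simp only [hdeg_image hedges] at this
  nlinarith

lemma sub_le_xorVal_of_GIval (hc : 1 ≤ c) (hm : (m : ℝ) = c * n) (hm0 : 0 < m)
    (hedges : Function.Injective fun i : Fin m => tripleOf (𝒞 i))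
    (hdb : DegBounded (Finset.univ.image fun i : Fin m => tripleOf (𝒞 i)) ε (100 * c))
    (hε : ε < 1)
    (hπ : 1 - ε / (95 * c) ≤ GIval (gadgetGraph 𝒞) (gadgetGraph (homogInst 𝒞)) π) :
    1 - 11823 / 95 * ε ≤ xorVal 𝒞 := by
  have hε0 : 0 ≤ ε := by
    have : 0 ≤ ε / (95 * c) := by linarith [hπ.trans (GIval_le_one π)]
    have hc0 : 0 < 95 * c := by linarith
    simpa [hc0.ne'] using mul_nonneg this hc0.le
  have hL := card_lostEdges_gadgetGraph_le hc hm hε0 hπ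
  have hdeg := sum_card_lostVars_le hc hm hedges hdb hε hL
  have hunsat := card_filter_not_satisfies_decode_le π
  have hsplit := Finset.card_filter_add_card_filter_not (s := Finset.univ)
    fun i => satisfies (decode π) (𝒞 i)
  rw [Finset.card_univ, Fintype.card_fin] at hsplit
  have hnm : ε * n ≤ ε * m := by
    rw [hm]
    nlinarith
  refine le_trans ?_ (le_xorVal 𝒞 (decode π))
  rw [xorValAt, le_div_iff₀ (by exact_mod_cast hm0)]
  have hsplit' := congrArg (Nat.cast : ℕ → ℝ) hsplit
  have hunsat' := (Nat.cast_le (α := ℝ)).mpr hunsat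
  push_cast at hsplit' hunsat' hdeg
  linarith

end Bounds

theorem soundness_decoding_general (n m : ℕ) (c ε β γ : ℝ) (hc : 1 ≤ c) (hm : (m : ℝ) = c * n)
    (𝒞 : XorInstance n m)
    (hedges : Function.Injective fun i : Fin m => tripleOf (𝒞 i))
    (hdb : DegBounded (Finset.univ.image fun i : Fin m => tripleOf (𝒞 i)) ε (100 * c))
    (hasym : hAsymmetric (Finset.univ.image fun i : Fin m => tripleOf (𝒞 i)) β γ)
    (hGI : 1 - min (1 / 200) (min (γ / 48) (ε / (95 * c))) ≤
      GI (gadgetGraph 𝒞) (gadgetGraph (homogInst 𝒞))) :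
    0.9 - 100 * (ε + β) ≤ xorVal 𝒞 := by
  set δ := min (1 / 200) (min (γ / 48) (ε / (95 * c)))
  have hδ : δ ≤ 1 / 200 ∧ δ ≤ γ / 48 ∧ δ ≤ ε / (95 * c) :=
    ⟨min_le_left _ _, (min_le_right _ _).trans (min_le_left _ _),
      (min_le_right _ _).trans (min_le_right _ _)⟩
  have : Nonempty (GVert 𝒞 ≃ GVert (homogInst 𝒞)) :=
    Fintype.card_eq.mp (by rw [card_gVert, card_gVert])
  obtain ⟨π, hπ⟩ := exists_GI_le_GIval (G := gadgetGraph 𝒞) (H := gadgetGraph (homogInst 𝒞))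
  have hπδ := hGI.trans hπ
  have hδ0 : 0 ≤ δ := by linarith [hπδ.trans (GIval_le_one π)]
  have hm0 : 0 < m := by
    rcases m.eq_zero_or_pos with rfl | hm0
    · obtain rfl : n = 0 := by
        exact_mod_cast (mul_eq_zero.mp (hm.symm.trans Nat.cast_zero)).resolve_left
          (one_pos.trans_le hc).ne'
      linarith [hπδ.trans_eq (GIval_of_isEmpty π)]
    · exact hm0
  have hβ : 0 ≤ β := hasym.nonneg ⟨_, Finset.mem_image_of_mem _ (Finset.mem_univ ⟨0, hm0⟩)⟩
    (by linarith)
  rcases le_or_gt (1 / 250) ε with hε | hε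
  · linarith [half_le_xorVal 𝒞 hm0]
  · linarith [sub_le_xorVal_of_GIval hc hm hm0 hedges hdb (by linarith) (π := π) (by linarith)]

/-- **Soundness decoding.**  Let `H` be the 3-uniform constraint
hypergraph of the 3XOR instance `𝒞` (with `m = cn` distinct hyperedges, `c ≥ 1`);
suppose it is `(ε, 100c)`-degree bounded and `(β, γ)`-asymmetric with `γ ≥ 200ε`.
Setting `δ = min{1/200, γ/48, ε/(95c)}`, if `GI(G_𝒞, G_{homog(𝒞)}) ≥ 1 − δ` then
`val(𝒞) ≥ 0.9 − 100(ε + β)`. -/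
theorem soundness_decoding (n m : ℕ) (c ε β γ : ℝ) (hc : 1 ≤ c) (hm : (m : ℝ) = c * n)
    (𝒞 : XorInstance n m)
    (hedges : Function.Injective fun i : Fin m => tripleOf (𝒞 i))
    (hdb : DegBounded (Finset.univ.image fun i : Fin m => tripleOf (𝒞 i)) ε (100 * c))
    (hasym : hAsymmetric (Finset.univ.image fun i : Fin m => tripleOf (𝒞 i)) β γ)
    (hγ : 200 * ε ≤ γ)
    (hGI : 1 - min (1 / 200) (min (γ / 48) (ε / (95 * c))) ≤
      GI (gadgetGraph 𝒞) (gadgetGraph (homogInst 𝒞))) :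
    0.9 - 100 * (ε + β) ≤ xorVal 𝒞 :=
  soundness_decoding_general n m c ε β γ hc hm 𝒞 hedges hdb hasym hGI

end Giso
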